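/- Let G be a group, χ : G → (ℝ, +) a nonzero homomorphism, M = G_χ, and let K and H be finite subgroups of G. Then [M/K, M/H] is finitely generated as a W_MK-set if and only if for every subgroup K' of H the set Ω_{K'} := {mH | m ∈ M, Km = mK'} is either empty or W_MK-transitive. -/

import Mathlib

/-!
Write the condition `Km = mK'` as `K = m K' m⁻¹`. Every `mH ∈ [M/K, M/H]` lies in
`Ω_{K'}` for `K' = m⁻¹ K m ≤ H`, and each `Ω_{K'}` is `W_MK`-stable. Since `χ` vanishes on the
finite group `H`, `χ m` only depends on the coset `mH`. If `m₀H, mH ∈ Ω_{K'}` and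
`χ m₀ ≤ χ m`, then `x = m m₀⁻¹` lies in `W_MK` and `mH = x · m₀H`; so `Ω_{K'}` is transitive
as soon as `χ` attains a minimum on representatives of its elements.

If a finite `F` generates, then every element of `Ω_{K'}` is `x · Y` with `Y ∈ F ∩ Ω_{K'}`
(if `x · nH ∈ Ω_{K'}` with `x ∈ W_MK`, then `nH ∈ Ω_{K'}`, represented by some `nh`, `h ∈ H`),
and a representative of minimal `χ` among the finitely many elements of `F ∩ Ω_{K'}` generates.
Conversely, `H` has finitely many subgroups, and one generator of each nonempty `Ω_{K'}` suffices.
-/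

/-- `[M/K, M/H]` for `M = G_χ`: the set of cosets `mH` with `m ∈ G_χ` and `Km ⊆ mH`. -/
def morSetChi {G : Type*} [Group G] (χ : G → ℝ) (K H : Set G) : Set (Set G) :=
  {X | ∃ m : G, 0 ≤ χ m ∧ X = (m * ·) '' H ∧ (· * m) '' K ⊆ (m * ·) '' H}

/-- Representatives of elements of `W_MK = {xK | x ∈ G_χ, Kx = xK}` for `M = G_χ`. -/
def weylChi {G : Type*} [Group G] (χ : G → ℝ) (K : Set G) : Set G :=
  {x | 0 ≤ χ x ∧ (· * x) '' K = (x * ·) '' K}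

/-- `Ω_{K'} = {mH | m ∈ G_χ, Km = mK'}` for `M = G_χ`. -/
def OmegaChi {G : Type*} [Group G] (χ : G → ℝ) (K H K' : Set G) : Set (Set G) :=
  {X | ∃ m : G, 0 ≤ χ m ∧ X = (m * ·) '' H ∧ (· * m) '' K = (m * ·) '' K'}

open scoped Pointwise
open ConjAct

section
variable {G : Type*} [Group G]

lemma image_mul_right_image_mul_left (m : G) (S : Set G) :
    (· * m⁻¹) '' ((m * ·) '' S) = toConjAct m • S := by
  rw [Set.image_image, ← Set.image_smul]
  simp [toConjAct_smul, mul_assoc]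

lemma image_mul_right_eq_image_mul_left_iff {m : G} {K S : Set G} :
    (· * m) '' K = (m * ·) '' S ↔ K = toConjAct m • S := by
  rw [← (Set.image_injective.2 (mul_left_injective m⁻¹)).eq_iff,
    image_mul_right_image_mul_left, Set.image_image]
  simp

lemma image_mul_right_subset_image_mul_left_iff {m : G} {K S : Set G} :
    (· * m) '' K ⊆ (m * ·) '' S ↔ K ⊆ toConjAct m • S := by
  rw [← Set.image_subset_image_iff (mul_left_injective m⁻¹),
    image_mul_right_image_mul_left, Set.image_image]
  simp

lemma finite_setOf_subgroup_le {H : Subgroup G} (hH : (H : Set G).Finite) :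
    {K : Subgroup G | K ≤ H}.Finite :=
  hH.finite_subsets.preimage SetLike.coe_injective.injOn

variable {χ : G → ℝ}

def chiHom (hχ : ∀ a b : G, χ (a * b) = χ a + χ b) : G →* Multiplicative ℝ :=
  MonoidHom.mk' (fun g => .ofAdd (χ g)) hχ

lemma chi_inv (hχ : ∀ a b : G, χ (a * b) = χ a + χ b) (g : G) : χ g⁻¹ = -χ g :=
  congrArg Multiplicative.toAdd (map_inv (chiHom hχ) g)

lemma chi_eq_zero_of_isOfFinOrder (hχ : ∀ a b : G, χ (a * b) = χ a + χ b) {g : G}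
    (hg : IsOfFinOrder g) : χ g = 0 :=
  congrArg Multiplicative.toAdd ((chiHom hχ).isOfFinOrder hg).eq_one'

lemma chi_eq_of_smul_eq (hχ : ∀ a b : G, χ (a * b) = χ a + χ b) {H : Subgroup G}
    (hH : (H : Set G).Finite) {m n : G} (h : m • (H : Set G) = n • H) : χ m = χ n := by
  have hmn : m⁻¹ * n ∈ H := (leftCoset_eq_iff H).1 h
  have : Finite H := hH.to_subtype
  have hfin : IsOfFinOrder (m⁻¹ * n) :=
    H.subtype.isOfFinOrder (isOfFinOrder_of_finite ⟨_, hmn⟩)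
  rw [← mul_inv_cancel_left m n, hχ, chi_eq_zero_of_isOfFinOrder hχ hfin, add_zero]

lemma mem_morSetChi_iff {K H X : Set G} :
    X ∈ morSetChi χ K H ↔ ∃ m, 0 ≤ χ m ∧ X = m • H ∧ K ⊆ toConjAct m • H := by
  simp only [morSetChi, image_mul_right_subset_image_mul_left_iff]
  rfl

lemma mem_weylChi_iff {K : Set G} {x : G} :
    x ∈ weylChi χ K ↔ 0 ≤ χ x ∧ K = toConjAct x • K := by
  simp only [weylChi, image_mul_right_eq_image_mul_left_iff]
  rfl

lemma mem_omegaChi_iff {K H S X : Set G} :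
    X ∈ OmegaChi χ K H S ↔ ∃ m, 0 ≤ χ m ∧ X = m • H ∧ K = toConjAct m • S := by
  simp only [OmegaChi, image_mul_right_eq_image_mul_left_iff]
  rfl

lemma omegaChi_subset_morSetChi {K H S : Set G} (hS : S ⊆ H) :
    OmegaChi χ K H S ⊆ morSetChi χ K H := by
  intro X hX
  obtain ⟨m, hm, rfl, hKm⟩ := mem_omegaChi_iff.1 hX
  exact mem_morSetChi_iff.2 ⟨m, hm, rfl, hKm ▸ Set.smul_set_mono hS⟩

lemma exists_mem_omegaChi_of_mem_morSetChi {K H : Subgroup G} {X : Set G}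
    (hX : X ∈ morSetChi χ K H) :
    ∃ K' : Subgroup G, K' ≤ H ∧ X ∈ OmegaChi χ K H K' := by
  obtain ⟨m, hm, rfl, hKm⟩ := mem_morSetChi_iff.1 hX
  refine ⟨toConjAct m⁻¹ • K, ?_, mem_omegaChi_iff.2 ⟨m, hm, rfl, ?_⟩⟩
  · rwa [← SetLike.coe_subset_coe, Subgroup.coe_pointwise_smul, map_inv,
      ← Set.subset_smul_set_iff]
  · rw [Subgroup.coe_pointwise_smul, map_inv, smul_inv_smul]

lemma smul_mem_omegaChi (hχ : ∀ a b : G, χ (a * b) = χ a + χ b) {K H S X : Set G} {x : G}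
    (hx : x ∈ weylChi χ K) (hX : X ∈ OmegaChi χ K H S) : x • X ∈ OmegaChi χ K H S := by
  obtain ⟨hx0, hxK⟩ := mem_weylChi_iff.1 hx
  obtain ⟨m, hm, rfl, hKm⟩ := mem_omegaChi_iff.1 hX
  refine mem_omegaChi_iff.2 ⟨x * m, by rw [hχ]; exact add_nonneg hx0 hm, (mul_smul x m H).symm, ?_⟩
  rw [map_mul, mul_smul, ← hKm, ← hxK]

lemma mem_omegaChi_of_smul_mem (hχ : ∀ a b : G, χ (a * b) = χ a + χ b) {H : Subgroup G}
    (hH : (H : Set G).Finite) {K S : Set G} {x n : G} (hx : x ∈ weylChi χ K) (hn : 0 ≤ χ n)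
    (hxn : x • n • (H : Set G) ∈ OmegaChi χ K H S) : n • (H : Set G) ∈ OmegaChi χ K H S := by
  obtain ⟨-, hxK⟩ := mem_weylChi_iff.1 hx
  obtain ⟨m, -, hxnm, hKm⟩ := mem_omegaChi_iff.1 hxn
  rw [smul_smul, leftCoset_eq_iff] at hxnm
  obtain ⟨h, hh, rfl⟩ : ∃ h ∈ H, x * n * h = m := ⟨_, hxnm, mul_inv_cancel_left _ _⟩
  have hcoset : n • (H : Set G) = (n * h) • H := by rw [mul_smul, smul_coe_set hh]
  refine mem_omegaChi_iff.2 ⟨n * h, chi_eq_of_smul_eq hχ hH hcoset ▸ hn, hcoset, ?_⟩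
  rwa [mul_assoc, map_mul, mul_smul, hxK, smul_left_cancel_iff] at hKm

lemma mul_inv_mem_weylChi (hχ : ∀ a b : G, χ (a * b) = χ a + χ b) {K S : Set G} {m₀ m : G}
    (hK₀ : K = toConjAct m₀ • S) (hKm : K = toConjAct m • S) (hle : χ m₀ ≤ χ m) :
    m * m₀⁻¹ ∈ weylChi χ K := by
  refine mem_weylChi_iff.2 ⟨by rw [hχ, chi_inv hχ]; linarith, ?_⟩
  rw [map_mul, mul_smul, map_inv, inv_smul_eq_iff.2 hK₀, hKm]

lemma omegaChi_eq_orbit_of_forall_le (hχ : ∀ a b : G, χ (a * b) = χ a + χ b) {K S : Set G}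
    (H : Set G) {m₀ : G} (h₀ : 0 ≤ χ m₀) (hK₀ : K = toConjAct m₀ • S)
    (hmin : ∀ m, 0 ≤ χ m → K = toConjAct m • S → χ m₀ ≤ χ m) :
    OmegaChi χ K H S = {X | ∃ x ∈ weylChi χ K, X = x • m₀ • H} := by
  ext X
  constructor
  · intro hX
    obtain ⟨m, hm, rfl, hKm⟩ := mem_omegaChi_iff.1 hX
    exact ⟨m * m₀⁻¹, mul_inv_mem_weylChi hχ hK₀ hKm (hmin m hm hKm), by
      rw [smul_smul, inv_mul_cancel_right]⟩
  · rintro ⟨x, hx, rfl⟩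
    exact smul_mem_omegaChi hχ hx (mem_omegaChi_iff.2 ⟨m₀, h₀, rfl, hK₀⟩)

lemma exists_smul_eq_generator_of_generating (hχ : ∀ a b : G, χ (a * b) = χ a + χ b)
    {H : Subgroup G} (hH : (H : Set G).Finite) {K S : Set G} (hS : S ⊆ H) {F : Set (Set G)}
    (hF : F ⊆ morSetChi χ K H)
    (hgen : morSetChi χ K H = {X | ∃ x ∈ weylChi χ K, ∃ Y ∈ F, X = x • Y})
    {m : G} (hm : 0 ≤ χ m) (hKm : K = toConjAct m • S) :
    ∃ x ∈ weylChi χ K, ∃ n, (0 ≤ χ n ∧ K = toConjAct n • S ∧ n • (H : Set G) ∈ F) ∧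
      m • (H : Set G) = (x * n) • H := by
  have hmH : m • (H : Set G) ∈ OmegaChi χ K H S := mem_omegaChi_iff.2 ⟨m, hm, rfl, hKm⟩
  have hmor := omegaChi_subset_morSetChi hS hmH
  rw [hgen] at hmor
  obtain ⟨x, hx, Y, hYF, hmY⟩ := hmor
  obtain ⟨n, hn, rfl, -⟩ := mem_morSetChi_iff.1 (hF hYF)
  obtain ⟨n', hn', hnn', hKn'⟩ :=
    mem_omegaChi_iff.1 (mem_omegaChi_of_smul_mem hχ hH hx hn (hmY ▸ hmH))
  exact ⟨x, hx, n', ⟨hn', hKn', hnn' ▸ hYF⟩, by rw [hmY, hnn', mul_smul]⟩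

lemma exists_omegaChi_eq_orbit_of_generating (hχ : ∀ a b : G, χ (a * b) = χ a + χ b)
    {H : Subgroup G} (hH : (H : Set G).Finite) {K S : Set G} (hS : S ⊆ H) {F : Set (Set G)}
    (hFfin : F.Finite) (hF : F ⊆ morSetChi χ K H)
    (hgen : morSetChi χ K H = {X | ∃ x ∈ weylChi χ K, ∃ Y ∈ F, X = x • Y})
    (hne : (OmegaChi χ K H S).Nonempty) :
    ∃ ω ∈ OmegaChi χ K H S, OmegaChi χ K H S = {X | ∃ x ∈ weylChi χ K, X = x • ω} := by
  set R := {n | 0 ≤ χ n ∧ K = toConjAct n • S ∧ n • (H : Set G) ∈ F}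
  -- `R ⊆ ⋃₀ F`, and every member of `F` is a coset of the finite group `H`.
  have hRfin : R.Finite := by
    refine (hFfin.sUnion fun Y hY => ?_).subset fun n hn =>
      ⟨_, hn.2.2, mem_own_leftCoset H.toSubmonoid n⟩
    obtain ⟨n, -, rfl, -⟩ := mem_morSetChi_iff.1 (hF hY)
    exact hH.smul_set
  have hRne : R.Nonempty := by
    obtain ⟨X, hX⟩ := hne
    obtain ⟨m, hm, -, hKm⟩ := mem_omegaChi_iff.1 hX
    obtain ⟨-, -, n, hn, -⟩ := exists_smul_eq_generator_of_generating hχ hH hS hF hgen hm hKm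
    exact ⟨n, hn⟩
  obtain ⟨m₀, ⟨h₀, hK₀, -⟩, hmin⟩ := Set.exists_min_image R χ hRfin hRne
  refine ⟨m₀ • H, mem_omegaChi_iff.2 ⟨m₀, h₀, rfl, hK₀⟩,
    omegaChi_eq_orbit_of_forall_le hχ H h₀ hK₀ fun m hm hKm => ?_⟩
  obtain ⟨x, hx, n, hn, hmxn⟩ := exists_smul_eq_generator_of_generating hχ hH hS hF hgen hm hKm
  calc χ m₀ ≤ χ n := hmin n hn
    _ ≤ χ x + χ n := le_add_of_nonneg_left (mem_weylChi_iff.1 hx).1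
    _ = χ m := by rw [chi_eq_of_smul_eq hχ hH hmxn, hχ]

lemma exists_finite_generating_of_omegaChi_eq_orbit (hχ : ∀ a b : G, χ (a * b) = χ a + χ b)
    {K H : Subgroup G} (hH : (H : Set G).Finite)
    (horbit : ∀ K' : Subgroup G, K' ≤ H → OmegaChi χ K H K' = ∅ ∨
      ∃ ω ∈ OmegaChi χ K H K', OmegaChi χ K H K' = {X | ∃ x ∈ weylChi χ K, X = x • ω}) :
    ∃ F : Set (Set G), F.Finite ∧ F ⊆ morSetChi χ K H ∧
      morSetChi χ K H = {X | ∃ x ∈ weylChi χ K, ∃ Y ∈ F, X = x • Y} := by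
  set 𝒦 := {K' : Subgroup G | K' ≤ H ∧ (OmegaChi χ K H K').Nonempty}
  have h𝒦 : ∀ K' ∈ 𝒦, ∃ ω ∈ OmegaChi χ K H K',
      OmegaChi χ K H K' = {X | ∃ x ∈ weylChi χ K, X = x • ω} :=
    fun K' hK' => (horbit K' hK'.1).resolve_left hK'.2.ne_empty
  choose! ω hω hω_orbit using h𝒦
  refine ⟨ω '' 𝒦, ((finite_setOf_subgroup_le hH).subset fun _ h => h.1).image ω, ?_, ?_⟩
  · rintro _ ⟨K', hK', rfl⟩
    exact omegaChi_subset_morSetChi hK'.1 (hω K' hK')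
  ext X
  constructor
  · intro hX
    obtain ⟨K', hK'H, hXK'⟩ := exists_mem_omegaChi_of_mem_morSetChi hX
    have hK' : K' ∈ 𝒦 := ⟨hK'H, X, hXK'⟩
    rw [hω_orbit K' hK'] at hXK'
    obtain ⟨x, hx, rfl⟩ := hXK'
    exact ⟨x, hx, ω K', ⟨K', hK', rfl⟩, rfl⟩
  · rintro ⟨x, hx, _, ⟨K', hK', rfl⟩, rfl⟩
    exact omegaChi_subset_morSetChi hK'.1 (smul_mem_omegaChi hχ hx (hω K' hK'))

end

theorem stmt14_general {G : Type*} [Group G] (χ : G → ℝ)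
    (hhom : ∀ a b : G, χ (a * b) = χ a + χ b)
    (K H : Subgroup G) (hH : (H : Set G).Finite) :
    (∃ F : Set (Set G), F.Finite ∧ F ⊆ morSetChi χ (K : Set G) (H : Set G) ∧
        morSetChi χ (K : Set G) (H : Set G) =
          {X | ∃ x ∈ weylChi χ (K : Set G), ∃ Y ∈ F, X = (x * ·) '' Y}) ↔
    (∀ K' : Subgroup G, K' ≤ H →
        OmegaChi χ (K : Set G) (H : Set G) (K' : Set G) = ∅ ∨
        ∃ ω ∈ OmegaChi χ (K : Set G) (H : Set G) (K' : Set G),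
          OmegaChi χ (K : Set G) (H : Set G) (K' : Set G) =
            {X | ∃ x ∈ weylChi χ (K : Set G), X = (x * ·) '' ω}) := by
  constructor
  · rintro ⟨F, hFfin, hF, hgen⟩ K' hK'
    exact (Set.eq_empty_or_nonempty _).imp_right
      (exists_omegaChi_eq_orbit_of_generating hhom hH hK' hFfin hF hgen)
  · exact exists_finite_generating_of_omegaChi_eq_orbit hhom hH

/-- for `M = G_χ` and finite subgroups `K, H` of `G`, the `W_MK`-set
`[M/K, M/H]` is finitely generated iff for every subgroup `K' ≤ H` the set
`Ω_{K'} = {mH | Km = mK'}` is empty or `W_MK`-transitive. -/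
theorem stmt14 {G : Type*} [Group G] (χ : G → ℝ)
    (hhom : ∀ a b : G, χ (a * b) = χ a + χ b) (hne : ∃ g : G, χ g ≠ 0)
    (K H : Subgroup G) (hK : (K : Set G).Finite) (hH : (H : Set G).Finite) :
    (∃ F : Set (Set G), F.Finite ∧ F ⊆ morSetChi χ (K : Set G) (H : Set G) ∧
        morSetChi χ (K : Set G) (H : Set G) =
          {X | ∃ x ∈ weylChi χ (K : Set G), ∃ Y ∈ F, X = (x * ·) '' Y}) ↔
    (∀ K' : Subgroup G, K' ≤ H →
        OmegaChi χ (K : Set G) (H : Set G) (K' : Set G) = ∅ ∨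
        ∃ ω ∈ OmegaChi χ (K : Set G) (H : Set G) (K' : Set G),
          OmegaChi χ (K : Set G) (H : Set G) (K' : Set G) =
            {X | ∃ x ∈ weylChi χ (K : Set G), X = (x * ·) '' ω}) :=
  stmt14_general χ hhom K H hH
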